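/- Let C : ℝ^n → ℝ^q and A : ℝ^n → ℝ^n be linear maps, let B = ker C, and let P_0, …, P_r : ℝ^m → ℝ^n be linear maps satisfying: C ∘ (A ∘ P_0) = 0; C ∘ (P_{i−1} − A ∘ P_i) = 0 for every 1 ≤ i ≤ r; and C ∘ P_r = 0. If the ranges of P_0, …, P_r together span ℝ^n, then the Kalman-type condition B + A(B) + A²(B) + ⋯ + A^r(B) = ℝ^n holds. -/

import Mathlib

/-! Write `S_k = B + A(B) + ⋯ + A^k(B)`, so that `A(S_k) ⊆ S_{k+1}`. Descending from `P_r`,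
whose range lies in `B = S_0`, the relation `P_{i-1} = (P_{i-1} - A P_i) + A P_i` with the first
summand in `B` shows `range P_i ⊆ S_{r-i}` for every `i`; all of these lie in `S_r`, and the
ranges span. -/

open Finset Submodule

theorem Submodule.finsetSum_le {R M ι : Type*} [Semiring R] [AddCommMonoid M] [Module R M]
    {s : Finset ι} {p : ι → Submodule R M} {q : Submodule R M} (h : ∀ i ∈ s, p i ≤ q) :
    ∑ i ∈ s, p i ≤ q :=
  Finset.sum_induction p (· ≤ q) (fun _ _ => sup_le) bot_le h

section Krylov

variable {R V : Type*} [Semiring R] [AddCommMonoid V] [Module R V]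
  (A : Module.End R V) (B : Submodule R V)

theorem le_sum_map_pow (k : ℕ) : B ≤ ∑ j ∈ range (k + 1), B.map (A ^ j) := by
  simpa [Module.End.one_eq_id] using
    single_le_sum (f := fun j => B.map (A ^ j)) (fun _ _ => bot_le) (mem_range.2 k.succ_pos)

theorem map_sum_map_pow_le (k : ℕ) :
    (∑ j ∈ range k, B.map (A ^ j)).map A ≤ ∑ j ∈ range (k + 1), B.map (A ^ j) := by
  rw [map_le_iff_le_comap]
  refine finsetSum_le fun j hj => map_le_iff_le_comap.1 ?_
  rw [← map_comp, ← Module.End.mul_eq_comp, ← pow_succ']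
  exact single_le_sum (f := fun j => B.map (A ^ j)) (fun _ _ => bot_le)
    (mem_range.2 (Nat.succ_lt_succ (mem_range.1 hj)))

end Krylov

theorem range_le_sum_map_pow_ker {R M V W : Type*} [Ring R] [AddCommGroup M] [Module R M]
    [AddCommGroup V] [Module R V] [AddCommGroup W] [Module R W]
    (C : V →ₗ[R] W) (A : Module.End R V) {r : ℕ} (P : Fin (r + 1) → M →ₗ[R] V)
    (hlast : C ∘ₗ P (Fin.last r) = 0)
    (hstep : ∀ i : Fin r, C ∘ₗ (P i.castSucc - A ∘ₗ P i.succ) = 0) (i : Fin (r + 1)) :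
    LinearMap.range (P i) ≤ ∑ j ∈ range (r - i + 1), (LinearMap.ker C).map (A ^ j) := by
  induction i using Fin.reverseInduction with
  | last =>
    rintro _ ⟨y, rfl⟩
    exact le_sum_map_pow A _ _ (LinearMap.congr_fun hlast y)
  | cast i ih =>
    rintro _ ⟨y, rfl⟩
    have hk : r - (i.castSucc : ℕ) = r - (i.succ : ℕ) + 1 := by
      simp only [Fin.val_castSucc, Fin.val_succ]; omega
    have hker : P i.castSucc y - A (P i.succ y) ∈ LinearMap.ker C :=
      LinearMap.congr_fun (hstep i) y
    rw [hk, ← sub_add_cancel (P i.castSucc y) (A (P i.succ y))]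
    exact add_mem (le_sum_map_pow A _ _ hker)
      (map_sum_map_pow_le A _ _ (mem_map_of_mem (ih ⟨y, rfl⟩)))

/-- If `B = ker C`, the linear maps `P_0,…,P_r` satisfy `C ∘ A ∘ P_0 = 0`,
`C ∘ (P_{i-1} - A ∘ P_i) = 0` for `1 ≤ i ≤ r`, `C ∘ P_r = 0`, and the ranges of the
`P_i` together span `ℝ^n`, then the Kalman-type condition
`B + A(B) + ⋯ + A^r(B) = ℝ^n` holds. -/
theorem stmt_13 (n m q r : ℕ)
    (C : (Fin n → ℝ) →ₗ[ℝ] (Fin q → ℝ)) (A : (Fin n → ℝ) →ₗ[ℝ] (Fin n → ℝ))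
    (P : Fin (r+1) → ((Fin m → ℝ) →ₗ[ℝ] (Fin n → ℝ)))
    (hstep : ∀ (i : ℕ) (h1 : 1 ≤ i) (h2 : i ≤ r),
      C ∘ₗ (P ⟨i - 1, by omega⟩ - A ∘ₗ P ⟨i, by omega⟩) = 0)
    (hlast : C ∘ₗ P (Fin.last r) = 0)
    (hspan : ∑ i : Fin (r+1), LinearMap.range (P i) = ⊤) :
    ∑ j ∈ Finset.range (r + 1), Submodule.map (A ^ j) (LinearMap.ker C) = ⊤ := by
  have hstep' (i : Fin r) : C ∘ₗ (P i.castSucc - A ∘ₗ P i.succ) = 0 :=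
    hstep (i + 1) (by omega) i.isLt
  rw [eq_top_iff, ← hspan]
  refine finsetSum_le fun i _ => (range_le_sum_map_pow_ker C A P hlast hstep' i).trans ?_
  exact sum_le_sum_of_subset (range_subset_range.2 (by omega))
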